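/- arXiv:1601.06668 — 2 statements merged into one kernel-verified Lean document; each statement's English description precedes it below -/
import Mathlib

section
/- If ψ : ℝ → ℝ is given by ψ(t) = a + b|t| + ∫₀^∞ (1 - e^{-λ|t|}) dμ(λ) with a, b ≥ 0 and μ a positive measure on (0,∞) satisfying ∫₀^∞ min(1,λ) dμ(λ) < ∞, then the restriction of ψ to (0,∞) is a Bernstein function, i.e., ψ ≥ 0 on (0,∞) and (-1)^{k-1} ψ^{(k)} ≥ 0 on (0,∞) for all k ≥ 1. -/
/-!
Differentiation under the integral sign is legitimate on `(0,∞)` because, for `t` bounded away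
from `0`, `λ ^ k e^{-λt} ≤ C min(1, λ)`, which is `μ`-integrable. It gives
`ψ' t = b + ∫ λ e^{-λt} dμ` and `ψ^{(k)} t = (-1)^{k-1} ∫ λ^k e^{-λt} dμ` for `k ≥ 2`,
whose signs are manifest.
-/

open MeasureTheory Real Filter Set Topology
open scoped Nat

/-- Near `l = 0` the factor `l ^ k` is at most `l`; for large `l` the exponential beats it. -/
theorem norm_pow_mul_exp_neg_le {k : ℕ} (hk : 1 ≤ k) {c x l : ℝ} (hc : 0 < c) (hcx : c ≤ x)
    (hl : 0 ≤ l) : ‖l ^ k * exp (-l * x)‖ ≤ max 1 (k ! / c ^ k) * min 1 l := by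
  rw [norm_of_nonneg (by positivity)]
  have hmono : l ^ k * exp (-l * x) ≤ l ^ k * exp (-l * c) := by
    gcongr l ^ k * ?_
    exact exp_le_exp.2 (by nlinarith)
  refine hmono.trans ?_
  rcases le_or_gt l 1 with hl1 | hl1
  · have hpow : l ^ k ≤ l := pow_le_of_le_one hl hl1 (by omega)
    have hexp : exp (-l * c) ≤ 1 := exp_le_one_iff.2 (by nlinarith)
    rw [min_eq_right hl1]
    calc l ^ k * exp (-l * c) ≤ l * 1 := mul_le_mul hpow hexp (exp_pos _).le hl
      _ ≤ max 1 (k ! / c ^ k) * l := by nlinarith [le_max_left 1 ((k ! : ℝ) / c ^ k)]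
  · have hfact : (l * c) ^ k ≤ k ! * exp (l * c) := by
      have := pow_div_factorial_le_exp (x := l * c) (mul_nonneg hl hc.le) k
      rw [div_le_iff₀ (by positivity)] at this
      linarith
    rw [min_eq_left hl1.le, mul_one]
    refine le_trans ?_ (le_max_right _ _)
    rw [neg_mul, exp_neg, ← div_eq_mul_inv, div_le_div_iff₀ (exp_pos _) (by positivity)]
    rwa [mul_pow] at hfact

section LaplaceIntegrals

variable {ν : Measure ℝ}

theorem integrable_pow_mul_exp_neg (hν : ∀ᵐ l ∂ν, 0 ≤ l)
    (hmin : Integrable (fun l => min 1 l) ν) {k : ℕ} (hk : 1 ≤ k) {t : ℝ} (ht : 0 < t) :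
    Integrable (fun l => l ^ k * exp (-l * t)) ν :=
  (hmin.const_mul _).mono' (by fun_prop) <|
    hν.mono fun _ hl => norm_pow_mul_exp_neg_le hk ht le_rfl hl

theorem integrable_one_sub_exp_neg (hν : ∀ᵐ l ∂ν, 0 ≤ l)
    (hmin : Integrable (fun l => min 1 l) ν) {t : ℝ} (ht : 0 ≤ t) :
    Integrable (fun l => 1 - exp (-l * t)) ν := by
  refine (hmin.const_mul (max 1 t)).mono' (by fun_prop) (hν.mono fun l hl => ?_)
  have hexp_le : exp (-l * t) ≤ 1 := exp_le_one_iff.2 (by nlinarith)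
  have hlin : 1 - l * t ≤ exp (-l * t) := by linarith [add_one_le_exp (-l * t)]
  rw [norm_of_nonneg (by linarith)]
  rcases le_or_gt l 1 with hl1 | hl1
  · rw [min_eq_right hl1]
    nlinarith [le_max_right 1 t]
  · rw [min_eq_left hl1.le, mul_one]
    linarith [le_max_left 1 t, exp_pos (-l * t)]

theorem integral_one_sub_exp_neg_nonneg (hν : ∀ᵐ l ∂ν, 0 ≤ l) {t : ℝ} (ht : 0 ≤ t) :
    0 ≤ ∫ l, (1 - exp (-l * t)) ∂ν :=
  integral_nonneg_of_ae <| hν.mono fun l hl =>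
    sub_nonneg.2 (exp_le_one_iff.2 (by nlinarith))

theorem hasDerivAt_integral_pow_mul_exp_neg (hν : ∀ᵐ l ∂ν, 0 ≤ l)
    (hmin : Integrable (fun l => min 1 l) ν) {k : ℕ} (hk : 1 ≤ k) {t : ℝ} (ht : 0 < t) :
    HasDerivAt (fun s => ∫ l, l ^ k * exp (-l * s) ∂ν)
      (-∫ l, l ^ (k + 1) * exp (-l * t) ∂ν) t := by
  have hderiv : ∀ l s : ℝ, HasDerivAt (fun s => l ^ k * exp (-l * s))
      (-(l ^ (k + 1) * exp (-l * s))) s := fun l s =>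
    ((((hasDerivAt_id' s).const_mul (-l)).exp).const_mul (l ^ k)).congr_deriv (by ring)
  rw [← integral_neg]
  refine (hasDerivAt_integral_of_dominated_loc_of_deriv_le (Ioi_mem_nhds (half_lt_self ht))
    (.of_forall fun _ => by fun_prop) (integrable_pow_mul_exp_neg hν hmin hk ht) (by fun_prop)
    (hν.mono fun l hl s hs => ?_) (hmin.const_mul (max 1 ((k + 1)! / (t / 2) ^ (k + 1))))
    (.of_forall fun l s _ => hderiv l s)).2
  rw [norm_neg]
  exact norm_pow_mul_exp_neg_le (Nat.le_add_left 1 k) (half_pos ht) (le_of_lt hs) hl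

theorem hasDerivAt_integral_one_sub_exp_neg (hν : ∀ᵐ l ∂ν, 0 ≤ l)
    (hmin : Integrable (fun l => min 1 l) ν) {t : ℝ} (ht : 0 < t) :
    HasDerivAt (fun s => ∫ l, (1 - exp (-l * s)) ∂ν) (∫ l, l ^ 1 * exp (-l * t) ∂ν) t := by
  have hderiv : ∀ l s : ℝ, HasDerivAt (fun s => 1 - exp (-l * s)) (l ^ 1 * exp (-l * s)) s :=
    fun l s => ((((hasDerivAt_id' s).const_mul (-l)).exp).const_sub 1).congr_deriv (by ring)
  exact (hasDerivAt_integral_of_dominated_loc_of_deriv_le (F := fun s l => 1 - exp (-l * s))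
    (F' := fun s l => l ^ 1 * exp (-l * s)) (Ioi_mem_nhds (half_lt_self ht))
    (.of_forall fun _ => by fun_prop) (integrable_one_sub_exp_neg hν hmin ht.le) (by fun_prop)
    (hν.mono fun l hl s hs => norm_pow_mul_exp_neg_le le_rfl (half_pos ht) (le_of_lt hs) hl)
    (hmin.const_mul (max 1 (1 ! / (t / 2) ^ 1)))
    (.of_forall fun l s _ => hderiv l s)).2

theorem iteratedDeriv_integral_pow_mul_exp_neg (hν : ∀ᵐ l ∂ν, 0 ≤ l)
    (hmin : Integrable (fun l => min 1 l) ν) {k : ℕ} (hk : 1 ≤ k) (n : ℕ) {t : ℝ}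
    (ht : 0 < t) : iteratedDeriv n (fun s => ∫ l, l ^ k * exp (-l * s) ∂ν) t =
      (-1) ^ n * ∫ l, l ^ (k + n) * exp (-l * t) ∂ν := by
  induction n generalizing t with
  | zero => simp
  | succ n ih =>
    have heq : iteratedDeriv n (fun s => ∫ l, l ^ k * exp (-l * s) ∂ν) =ᶠ[𝓝 t]
        fun s => (-1) ^ n * ∫ l, l ^ (k + n) * exp (-l * s) ∂ν :=
      eventually_of_mem (Ioi_mem_nhds ht) fun s hs => ih hs
    rw [iteratedDeriv_succ, heq.deriv_eq,
      ((hasDerivAt_integral_pow_mul_exp_neg hν hmin (by omega) ht).const_mul _).deriv,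
      pow_succ, ← add_assoc]
    ring

end LaplaceIntegrals

/-- The Lévy–Khintchine representation defines a Bernstein function on `(0,∞)`. -/
theorem levyKhintchine_bernstein (a b : ℝ) (ha : 0 ≤ a) (hb : 0 ≤ b)
    (μ : Measure ℝ)
    (hμ : ∫⁻ l in Set.Ioi (0 : ℝ), ENNReal.ofReal (min 1 l) ∂μ < ⊤)
    (ψ : ℝ → ℝ)
    (hψ : ∀ t : ℝ, ψ t = a + b * |t| +
      ∫ l in Set.Ioi (0 : ℝ), (1 - Real.exp (-l * |t|)) ∂μ) :
    (∀ t : ℝ, 0 < t → 0 ≤ ψ t) ∧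
    (∀ k : ℕ, 1 ≤ k → ∀ t : ℝ, 0 < t → 0 ≤ (-1 : ℝ) ^ (k - 1) * iteratedDeriv k ψ t) := by
  set ν := μ.restrict (Ioi 0)
  have hν : ∀ᵐ l ∂ν, 0 ≤ l := (ae_restrict_mem measurableSet_Ioi).mono fun _ hl => le_of_lt hl
  have hmin : Integrable (fun l => min 1 l) ν :=
    (lintegral_ofReal_ne_top_iff_integrable (by fun_prop)
      (hν.mono fun _ hl => le_min zero_le_one hl)).1 hμ.ne
  have hmoment_nonneg : ∀ k : ℕ, ∀ t : ℝ, 0 ≤ ∫ l, l ^ k * exp (-l * t) ∂ν := fun k t =>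
    integral_nonneg_of_ae (hν.mono fun l hl => by positivity)
  have hderiv : ∀ s, 0 < s → HasDerivAt ψ (b + ∫ l, l ^ 1 * exp (-l * s) ∂ν) s := by
    intro s hs
    have hψ_near : ψ =ᶠ[𝓝 s] fun r => a + b * r + ∫ l, (1 - exp (-l * r)) ∂ν :=
      eventually_of_mem (Ioi_mem_nhds hs) fun r hr => by rw [hψ, abs_of_pos hr]
    refine HasDerivAt.congr_of_eventuallyEq ?_ hψ_near
    exact ((((hasDerivAt_id' s).const_mul b).const_add a).add
      (hasDerivAt_integral_one_sub_exp_neg hν hmin hs)).congr_deriv (by ring)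
  refine ⟨fun t _ => ?_, fun k hk t ht => ?_⟩
  · rw [hψ]
    exact add_nonneg (add_nonneg ha (mul_nonneg hb (abs_nonneg t)))
      (integral_one_sub_exp_neg_nonneg hν (abs_nonneg t))
  obtain ⟨n, rfl⟩ : ∃ n, k = n + 1 := ⟨k - 1, by omega⟩
  have hderiv_eq : deriv ψ =ᶠ[𝓝 t] fun s => b + ∫ l, l ^ 1 * exp (-l * s) ∂ν :=
    eventually_of_mem (Ioi_mem_nhds ht) fun s hs => (hderiv s hs).deriv
  rw [Nat.add_sub_cancel, iteratedDeriv_succ', hderiv_eq.iteratedDeriv_eq]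
  cases n with
  | zero => simpa using add_nonneg hb (hmoment_nonneg 1 t)
  | succ m =>
    rw [iteratedDeriv_const_add m.succ_pos,
      iteratedDeriv_integral_pow_mul_exp_neg hν hmin le_rfl _ ht, ← mul_assoc, ← pow_add,
      Even.neg_one_pow ⟨_, rfl⟩, one_mul]
    exact hmoment_nonneg _ t
end

section
/- For 0 < H ≤ 1/2, the fractional Brownian motion covariance kernel C(s,t) = (|s|^{2H} + |t|^{2H} - |s-t|^{2H})/2 is positive definite on ℝ. -/
/-!
For `0 < α < 2` and every real `x`,
`|x| ^ α * K_α = ∫₀^∞ (1 - cos (x u)) u ^ (-1 - α) du` with `K_α > 0`.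
For each fixed `u`, the kernel `ψ(s) + ψ(t) - ψ(s - t)` with `ψ = 1 - cos (· u)` equals
`(1 - cos su)(1 - cos tu) + sin su sin tu`, which is positive semidefinite. Integrating in `u`,
the kernel `|s| ^ α + |t| ^ α - |s - t| ^ α` is positive semidefinite as well.
-/

open MeasureTheory Set Real

lemma sum_sum_mul_integral_nonneg {ι α : Type*} [Fintype ι] [MeasurableSpace α]
    {μ : Measure α} (c : ι → ℝ) {F : ι → ι → α → ℝ} (hF : ∀ i j, Integrable (F i j) μ)
    (hpos : ∀ᵐ u ∂μ, 0 ≤ ∑ i, ∑ j, c i * c j * F i j u) :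
    0 ≤ ∑ i, ∑ j, c i * c j * ∫ u, F i j u ∂μ := by
  have hF' : ∀ i j, Integrable (fun u ↦ c i * c j * F i j u) μ :=
    fun i j ↦ (hF i j).const_mul _
  calc 0 ≤ ∫ u, ∑ i, ∑ j, c i * c j * F i j u ∂μ := integral_nonneg_of_ae hpos
    _ = _ := by
      rw [integral_finsetSum _ fun i _ ↦ integrable_finsetSum _ fun j _ ↦ hF' i j]
      refine Finset.sum_congr rfl fun i _ ↦ ?_
      rw [integral_finsetSum _ fun j _ ↦ hF' i j]
      simp only [integral_const_mul]

lemma sum_sum_mul_one_sub_cos_kernel {ι : Type*} [Fintype ι] (c t : ι → ℝ) :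
    ∑ i, ∑ j, c i * c j * ((1 - cos (t i)) + (1 - cos (t j)) - (1 - cos (t i - t j))) =
      (∑ i, c i * (1 - cos (t i))) ^ 2 + (∑ i, c i * sin (t i)) ^ 2 := by
  simp_rw [sq, Finset.sum_mul_sum, ← Finset.sum_add_distrib, cos_sub]
  refine Finset.sum_congr rfl fun i _ ↦ Finset.sum_congr rfl fun j _ ↦ ?_
  ring

lemma sum_sum_mul_one_sub_cos_kernel_nonneg {ι : Type*} [Fintype ι] (c t : ι → ℝ) :
    0 ≤ ∑ i, ∑ j, c i * c j * ((1 - cos (t i)) + (1 - cos (t j)) - (1 - cos (t i - t j))) := by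
  rw [sum_sum_mul_one_sub_cos_kernel]
  positivity

section

variable {α : ℝ}

lemma integrableOn_one_sub_cos_mul_rpow (h0 : 0 < α) (h2 : α < 2) (x : ℝ) :
    IntegrableOn (fun u : ℝ ↦ (1 - cos (x * u)) * u ^ (-1 - α)) (Ioi 0) := by
  have hmeas : ∀ s : Set ℝ, MeasurableSet s → s ⊆ Ioi 0 → AEStronglyMeasurable
      (fun u : ℝ ↦ (1 - cos (x * u)) * u ^ (-1 - α)) (volume.restrict s) := fun s hs hs0 ↦
    ((by fun_prop : Continuous fun u : ℝ ↦ 1 - cos (x * u)).continuousOn.mul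
      (continuousOn_id.rpow_const fun u hu ↦ Or.inl (hs0 hu).ne')).aestronglyMeasurable hs
  have hcos : ∀ u, 0 ≤ 1 - cos (x * u) := fun u ↦ sub_nonneg.2 (cos_le_one _)
  rw [← Ioc_union_Ioi_eq_Ioi zero_le_one]
  refine IntegrableOn.union ?_ ?_
  · have hint : IntegrableOn (fun u : ℝ ↦ x ^ 2 / 2 * u ^ (1 - α)) (Ioc 0 1) :=
      ((intervalIntegral.intervalIntegrable_rpow' (by linarith)).1).const_mul _
    refine hint.mono' (hmeas _ measurableSet_Ioc Ioc_subset_Ioi_self) ?_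
    filter_upwards [ae_restrict_mem measurableSet_Ioc] with u hu
    replace hu : 0 < u := hu.1
    rw [norm_of_nonneg (mul_nonneg (hcos u) (rpow_nonneg hu.le _))]
    calc (1 - cos (x * u)) * u ^ (-1 - α) ≤ (x * u) ^ 2 / 2 * u ^ (-1 - α) := by
          gcongr
          linarith [one_sub_sq_div_two_le_cos (x := x * u)]
      _ = x ^ 2 / 2 * u ^ (1 - α) := by
          rw [show 1 - α = 2 + (-1 - α) by ring, rpow_add hu, rpow_two]
          ring
  · have hint : IntegrableOn (fun u : ℝ ↦ 2 * u ^ (-1 - α)) (Ioi 1) :=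
      (integrableOn_Ioi_rpow_of_lt (by linarith) one_pos).const_mul 2
    refine hint.mono' (hmeas _ measurableSet_Ioi (Ioi_subset_Ioi zero_le_one)) ?_
    filter_upwards [ae_restrict_mem measurableSet_Ioi] with u hu
    have hu0 : (0 : ℝ) < u := one_pos.trans hu
    rw [norm_of_nonneg (mul_nonneg (hcos u) (rpow_nonneg hu0.le _))]
    gcongr
    linarith [neg_one_le_cos (x * u)]

lemma integral_one_sub_cos_mul_rpow (h0 : 0 < α) (x : ℝ) :
    ∫ u in Ioi (0 : ℝ), (1 - cos (x * u)) * u ^ (-1 - α) =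
      |x| ^ α * ∫ u in Ioi (0 : ℝ), (1 - cos u) * u ^ (-1 - α) := by
  rcases eq_or_ne x 0 with rfl | hx
  · simp [zero_rpow h0.ne']
  have hb : 0 < |x| := abs_pos.2 hx
  have hscale : ∀ u ∈ Ioi (0 : ℝ), (1 - cos (x * u)) * u ^ (-1 - α) =
      |x| ^ (1 + α) * ((1 - cos (|x| * u)) * (|x| * u) ^ (-1 - α)) := fun u (hu : 0 < u) ↦ by
    rw [← cos_abs (x * u), abs_mul, abs_of_pos hu, mul_rpow hb.le hu.le]
    calc _ = (|x| ^ (1 + α) * |x| ^ (-1 - α)) * ((1 - cos (|x| * u)) * u ^ (-1 - α)) := by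
          rw [← rpow_add hb]; norm_num
      _ = _ := by ring
  rw [setIntegral_congr_fun measurableSet_Ioi hscale, integral_const_mul,
    integral_comp_mul_left_Ioi (fun v ↦ (1 - cos v) * v ^ (-1 - α)) 0 hb, mul_zero, smul_eq_mul,
    ← mul_assoc, ← rpow_neg_one, ← rpow_add hb]
  norm_num

lemma integral_one_sub_cos_mul_rpow_pos (h0 : 0 < α) (h2 : α < 2) :
    0 < ∫ u in Ioi (0 : ℝ), (1 - cos u) * u ^ (-1 - α) := by
  have hint : IntegrableOn (fun u : ℝ ↦ (1 - cos u) * u ^ (-1 - α)) (Ioi 0) := by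
    simpa using integrableOn_one_sub_cos_mul_rpow h0 h2 1
  have hsub : Ioc (π / 2) π ⊆ Ioi 0 := fun u hu ↦ (by positivity : (0 : ℝ) < π / 2).trans hu.1
  have hnonneg : 0 ≤ᵐ[volume.restrict (Ioi 0)] fun u : ℝ ↦ (1 - cos u) * u ^ (-1 - α) := by
    filter_upwards [ae_restrict_mem measurableSet_Ioi] with u (hu : 0 < u)
    exact mul_nonneg (sub_nonneg.2 (cos_le_one u)) (rpow_nonneg hu.le _)
  have hlower : ∀ u ∈ Ioc (π / 2) π, π ^ (-1 - α) ≤ (1 - cos u) * u ^ (-1 - α) := by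
    intro u hu
    have hu0 : 0 < u := hsub hu
    have hcos : cos u ≤ 0 := cos_nonpos_of_pi_div_two_le_of_le hu.1.le (by linarith [hu.2])
    calc π ^ (-1 - α) ≤ u ^ (-1 - α) := rpow_le_rpow_of_nonpos hu0 hu.2 (by linarith)
      _ ≤ (1 - cos u) * u ^ (-1 - α) :=
        le_mul_of_one_le_left (rpow_nonneg hu0.le _) (by linarith)
  calc (0 : ℝ) < ∫ _ in Ioc (π / 2) π, π ^ (-1 - α) := by
        rw [setIntegral_const, volume_real_Ioc_of_le (by linarith [pi_pos]), smul_eq_mul, sub_half]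
        have := pi_pos
        positivity
    _ ≤ ∫ u in Ioc (π / 2) π, (1 - cos u) * u ^ (-1 - α) :=
        setIntegral_mono_on (integrableOn_const (by simp)) (hint.mono_set hsub)
          measurableSet_Ioc hlower
    _ ≤ ∫ u in Ioi 0, (1 - cos u) * u ^ (-1 - α) :=
        setIntegral_mono_set hint hnonneg hsub.eventuallyLE

lemma sum_sum_mul_rpow_kernel_nonneg {ι : Type*} [Fintype ι] (h0 : 0 < α) (h2 : α < 2)
    (c t : ι → ℝ) : 0 ≤ ∑ i, ∑ j, c i * c j * (|t i| ^ α + |t j| ^ α - |t i - t j| ^ α) := by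
  set K := ∫ u in Ioi (0 : ℝ), (1 - cos u) * u ^ (-1 - α)
  set f : ℝ → ℝ → ℝ := fun x u ↦ (1 - cos (x * u)) * u ^ (-1 - α)
  have hf : ∀ x, IntegrableOn (f x) (Ioi 0) := integrableOn_one_sub_cos_mul_rpow h0 h2
  have hfK : ∀ i j, (|t i| ^ α + |t j| ^ α - |t i - t j| ^ α) * K =
      ∫ u in Ioi 0, f (t i) u + f (t j) u - f (t i - t j) u := fun i j ↦ by
    rw [integral_sub (f := fun u ↦ f (t i) u + f (t j) u) ((hf _).add (hf _)) (hf _),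
      integral_add (hf _) (hf _)]
    simp only [f, integral_one_sub_cos_mul_rpow h0]
    ring
  refine nonneg_of_mul_nonneg_left (b := K) ?_ (integral_one_sub_cos_mul_rpow_pos h0 h2)
  simp_rw [Finset.sum_mul, mul_assoc (c _ * c _), hfK]
  refine sum_sum_mul_integral_nonneg c (fun i j ↦ ((hf _).add (hf _)).sub (hf _)) ?_
  filter_upwards [ae_restrict_mem measurableSet_Ioi] with u (hu : 0 < u)
  have hsplit : ∀ i j, c i * c j * (f (t i) u + f (t j) u - f (t i - t j) u) =
      c i * c j * ((1 - cos (t i * u)) + (1 - cos (t j * u)) - (1 - cos (t i * u - t j * u))) *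
        u ^ (-1 - α) := fun i j ↦ by
    simp only [f, sub_mul (t i)]
    ring
  simp_rw [hsplit, ← Finset.sum_mul]
  exact mul_nonneg (sum_sum_mul_one_sub_cos_kernel_nonneg c (t · * u)) (rpow_nonneg hu.le _)

end

/-- For `0 < H ≤ 1/2`, the fractional Brownian motion covariance kernel
`C(s,t) = (|s|^{2H} + |t|^{2H} - |s-t|^{2H})/2` is positive definite on `ℝ`. -/
theorem fBM_cov_posDef (H : ℝ) (hH0 : 0 < H) (hH : H ≤ 1 / 2) :
    ∀ (n : ℕ) (t : Fin n → ℝ) (c : Fin n → ℝ),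
      0 ≤ ∑ j, ∑ k, c j * c k *
        ((|t j| ^ (2 * H) + |t k| ^ (2 * H) - |t j - t k| ^ (2 * H)) / 2) := by
  intro n t c
  have h := sum_sum_mul_rpow_kernel_nonneg (α := 2 * H) (by positivity) (by linarith) c t
  simp_rw [← mul_div_assoc, ← Finset.sum_div]
  exact div_nonneg h zero_le_two
end
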